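/- Let 𝕜 be a commutative ring, k ≥ 1, and R = 𝕜[x_1,…,x_k]/(x_1x_2⋯x_k). For any subsets I, J ⊆ {1,…,k}, multiplication by x_{I∖J} gives a well-defined R-module homomorphism R/(x_J) → R/(x_I), and the R-module map R → Hom_R(R/(x_J), R/(x_I)) sending r to the homomorphism (s mod (x_J)) ↦ (r·x_{I∖J}·s mod (x_I)) is surjective with kernel (x_{I∩J}). In particular, Hom_R(R/(x_J), R/(x_I)) ≅ R/(x_{I∩J}) as R-modules. -/

import Mathlib

open MvPolynomial

/-- The ring `R = 𝕜[x₁,…,x_k]/(x₁x₂⋯x_k)`, with variables indexed by `Fin k`. -/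
abbrev NodalRing (𝕜 : Type*) [CommRing 𝕜] (k : ℕ) : Type _ :=
  MvPolynomial (Fin k) 𝕜 ⧸
    Ideal.span {∏ i : Fin k, (X i : MvPolynomial (Fin k) 𝕜)}

/-- `x_I`: the image in `R` of the monomial `∏_{i ∈ I} x_i` (with `x_∅ = 1`). -/
noncomputable def xgen (𝕜 : Type*) [CommRing 𝕜] (k : ℕ) (I : Finset (Fin k)) :
    NodalRing 𝕜 k :=
  Ideal.Quotient.mk _ (∏ i ∈ I, X i)

/-!
A linear map `R/(b) → R/(a)` is determined by the image of `1`, which must be killed by `b`.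
Hence `r ↦ (s ↦ r u s)` has kernel the colon ideal `((a) : u)`, and it is onto as soon as
`((a) : b) ⊆ (u) + (a)`. For `a = x_I`, `b = x_J`, `u = x_{I∖J}` both colon ideals are computed
upstairs in `𝕜[x₁,…,x_k]`: as `x_I ∣ x₁⋯x_k`, membership in `(x_I) ⊆ R` is divisibility by the
monomial `x_I`; monomials are nonzerodivisors; and a monomial dividing `f · x_B` divides `f`
when its variables avoid `B`.
-/

namespace MvPolynomial

variable {σ R : Type*} [CommRing R]

theorem monomial_one_dvd_of_dvd_mul_monomial_one {s t : σ →₀ ℕ}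
    (hst : Disjoint s.support t.support) {f : MvPolynomial σ R}
    (h : monomial s (1 : R) ∣ f * monomial t 1) : monomial s (1 : R) ∣ f := by
  rw [monomial_one_dvd_iff_modMonomial_eq_zero] at h ⊢
  ext m
  rw [coeff_zero]
  by_cases hsm : s ≤ m
  · exact coeff_modMonomial_of_le _ hsm
  have hsmt : ¬ s ≤ m + t := fun hle ↦ hsm fun j ↦ by
    by_cases hj : j ∈ t.support
    · rw [Finsupp.notMem_support_iff.1 (Finset.disjoint_right.1 hst hj)]
      exact Nat.zero_le _
    · simpa [Finsupp.notMem_support_iff.1 hj] using hle j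
  have := congr(coeff (m + t) $h)
  rwa [coeff_modMonomial_of_not_le _ hsmt, coeff_mul_monomial, mul_one, coeff_zero,
    ← coeff_modMonomial_of_not_le _ hsm] at this

theorem prod_X_eq_monomial (A : Finset σ) :
    (∏ i ∈ A, X i : MvPolynomial σ R) = monomial (∑ i ∈ A, Finsupp.single i 1) 1 :=
  (monomial_sum_one A _).symm

theorem support_sum_single_one_subset (A : Finset σ) :
    (∑ i ∈ A, Finsupp.single i 1).support ⊆ A := by
  classical
  exact Finsupp.support_finsetSum.trans <| Finset.biUnion_subset.2 fun _ hi ↦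
    Finsupp.support_single_subset.trans (Finset.singleton_subset_iff.2 hi)

theorem prod_X_dvd_of_dvd_mul_prod_X {A B : Finset σ} (hAB : Disjoint A B)
    {f : MvPolynomial σ R} (h : (∏ i ∈ A, X i) ∣ f * ∏ i ∈ B, X i) :
    (∏ i ∈ A, X i : MvPolynomial σ R) ∣ f := by
  simp only [prod_X_eq_monomial] at h ⊢
  exact monomial_one_dvd_of_dvd_mul_monomial_one
    (hAB.mono (support_sum_single_one_subset A) (support_sum_single_one_subset B)) h

end MvPolynomial

section SpanQuotient

open Ideal

variable {R : Type*} [CommRing R] {a b u : R}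

noncomputable def quotSpanMulLeft (hu : u * b ∈ span {a}) : R ⧸ span {b} →ₗ[R] R ⧸ span {a} :=
  (span {b}).liftQ ((span {a}).mkQ ∘ₗ LinearMap.mulLeft R u) <| by
    rw [span_le, Set.singleton_subset_iff]
    exact (Submodule.Quotient.mk_eq_zero _).2 hu

noncomputable def quotSpanMulLeftHom (hu : u * b ∈ span {a}) :
    R →ₗ[R] (R ⧸ span {b} →ₗ[R] R ⧸ span {a}) :=
  LinearMap.toSpanSingleton R _ (quotSpanMulLeft hu)

theorem quotSpanMulLeftHom_apply_mk (hu : u * b ∈ span {a}) (r s : R) :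
    quotSpanMulLeftHom hu r (Submodule.Quotient.mk s) = Submodule.Quotient.mk (r * u * s) := by
  rw [mul_assoc, ← smul_eq_mul, Submodule.Quotient.mk_smul]
  rfl

theorem linearMap_quotSpan_ext {M : Type*} [AddCommGroup M] [Module R M]
    {f g : R ⧸ span {b} →ₗ[R] M}
    (h : f (Submodule.Quotient.mk 1) = g (Submodule.Quotient.mk 1)) : f = g :=
  Submodule.linearMap_qext _ (LinearMap.ext_ring h)

theorem ker_quotSpanMulLeftHom (hu : u * b ∈ span {a}) :
    LinearMap.ker (quotSpanMulLeftHom hu) = (span {a}).colon {u} := by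
  ext r
  rw [LinearMap.mem_ker, Submodule.mem_colon_singleton, smul_eq_mul,
    ← Submodule.Quotient.mk_eq_zero, ← mul_one (r * u), ← quotSpanMulLeftHom_apply_mk hu]
  exact ⟨fun h ↦ by rw [h]; rfl, fun h ↦ linearMap_quotSpan_ext (h.trans rfl)⟩

theorem quotSpanMulLeftHom_surjective (hu : u * b ∈ span {a})
    (h : (span {a}).colon {b} ≤ span {u} ⊔ span {a}) :
    Function.Surjective (quotSpanMulLeftHom hu) := by
  intro f
  obtain ⟨c, hc⟩ := Submodule.Quotient.mk_surjective _ (f (Submodule.Quotient.mk 1))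
  have hbc : c ∈ (span {a}).colon {b} := by
    rw [Submodule.mem_colon_singleton, smul_eq_mul, mul_comm, ← smul_eq_mul,
      ← Submodule.Quotient.mk_eq_zero, Submodule.Quotient.mk_smul, hc, ← map_smul,
      ← Submodule.Quotient.mk_smul, smul_eq_mul, mul_one,
      (Submodule.Quotient.mk_eq_zero _).2 (mem_span_singleton_self b), map_zero]
  obtain ⟨_, hy, z, hz, rfl⟩ := Submodule.mem_sup.1 (h hbc)
  obtain ⟨r, rfl⟩ := mem_span_singleton'.1 hy
  refine ⟨r, linearMap_quotSpan_ext ?_⟩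
  rw [quotSpanMulLeftHom_apply_mk, mul_one, ← hc, Submodule.Quotient.eq]
  simpa using neg_mem hz

end SpanQuotient

section NodalRing

open Ideal

variable {𝕜 : Type*} [CommRing 𝕜] {k : ℕ}

theorem mk_mem_span_xgen_iff (I : Finset (Fin k)) (p : MvPolynomial (Fin k) 𝕜) :
    (Ideal.Quotient.mk _ p : NodalRing 𝕜 k) ∈ span {xgen 𝕜 k I} ↔ (∏ i ∈ I, X i) ∣ p := by
  have hle : span {∏ i : Fin k, (X i : MvPolynomial (Fin k) 𝕜)} ≤ span {∏ i ∈ I, X i} :=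
    span_singleton_le_span_singleton.2 (Finset.prod_dvd_prod_of_subset _ _ _ I.subset_univ)
  have hspan : span {xgen 𝕜 k I} = Ideal.map (Ideal.Quotient.mk _) (span {∏ i ∈ I, X i}) := by
    rw [map_span, Set.image_singleton]
    rfl
  rw [hspan, ← mem_comap, comap_map_of_surjective' _ Ideal.Quotient.mk_surjective, mk_ker,
    sup_eq_left.2 hle, mem_span_singleton]

theorem mk_mul_xgen_mem_span_xgen_iff (I A : Finset (Fin k)) (p : MvPolynomial (Fin k) 𝕜) :
    Ideal.Quotient.mk _ p * xgen 𝕜 k A ∈ span {xgen 𝕜 k I} ↔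
      (∏ i ∈ I, X i) ∣ p * ∏ i ∈ A, X i := by
  rw [← mk_mem_span_xgen_iff, map_mul]
  rfl

variable (I J : Finset (Fin k))

theorem xgen_sdiff_mul_xgen_mem_span : xgen 𝕜 k (I \ J) * xgen 𝕜 k J ∈ span {xgen 𝕜 k I} := by
  refine (mk_mul_xgen_mem_span_xgen_iff I J (∏ i ∈ I \ J, X i)).2 ?_
  rw [← Finset.prod_union Finset.sdiff_disjoint, Finset.sdiff_union_self_eq_union]
  exact Finset.prod_dvd_prod_of_subset _ _ _ Finset.subset_union_left

theorem colon_span_xgen_sdiff :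
    (span {xgen 𝕜 k I}).colon {xgen 𝕜 k (I \ J)} = span {xgen 𝕜 k (I ∩ J)} := by
  ext r
  obtain ⟨p, rfl⟩ := Ideal.Quotient.mk_surjective r
  rw [Submodule.mem_colon_singleton, smul_eq_mul, mk_mul_xgen_mem_span_xgen_iff,
    mk_mem_span_xgen_iff, ← Finset.prod_inter_mul_prod_sdiff I J, mul_comm, mul_comm p]
  exact (isRegular_prod_X _).left.dvd_cancel_left

theorem colon_span_xgen_le_span_xgen_sdiff :
    (span {xgen 𝕜 k I}).colon {xgen 𝕜 k J} ≤ span {xgen 𝕜 k (I \ J)} := by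
  intro r hr
  obtain ⟨p, rfl⟩ := Ideal.Quotient.mk_surjective r
  rw [Submodule.mem_colon_singleton, smul_eq_mul, mk_mul_xgen_mem_span_xgen_iff,
    ← Finset.prod_inter_mul_prod_sdiff I J, ← Finset.prod_inter_mul_prod_sdiff J I,
    Finset.inter_comm J I, mul_left_comm, (isRegular_prod_X _).left.dvd_cancel_left] at hr
  exact (mk_mem_span_xgen_iff _ _).2 (prod_X_dvd_of_dvd_mul_prod_X disjoint_sdiff_sdiff hr)

end NodalRing

theorem stmt_8 (𝕜 : Type*) [CommRing 𝕜] (k : ℕ)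
    (I J : Finset (Fin k)) :
    ∃ Φ : NodalRing 𝕜 k →ₗ[NodalRing 𝕜 k]
        ((NodalRing 𝕜 k ⧸ Ideal.span {xgen 𝕜 k J}) →ₗ[NodalRing 𝕜 k]
          (NodalRing 𝕜 k ⧸ Ideal.span {xgen 𝕜 k I})),
      (∀ r s : NodalRing 𝕜 k,
        Φ r (Submodule.Quotient.mk s)
          = Submodule.Quotient.mk (r * xgen 𝕜 k (I \ J) * s)) ∧
      Function.Surjective Φ ∧
      LinearMap.ker Φ = Ideal.span {xgen 𝕜 k (I ∩ J)} :=
  ⟨quotSpanMulLeftHom (xgen_sdiff_mul_xgen_mem_span I J), quotSpanMulLeftHom_apply_mk _,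
    quotSpanMulLeftHom_surjective _ ((colon_span_xgen_le_span_xgen_sdiff I J).trans le_sup_left),
    (ker_quotSpanMulLeftHom _).trans (colon_span_xgen_sdiff I J)⟩
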